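/- Let ω be a regular acoustic dispersion relation. There is a constant C₃ such that for all ε > 0, p ∈ ℝ³, and k with ‖k‖_∞ ≤ 1/2 and |k| > ε|p|, one has |ω(k + εp/2) − ω(k − εp/2) − εp·∇ω(k)| ≤ C₃ ε² |p|²/|k|. -/

import Mathlib

noncomputable section

abbrev E3 : Type := EuclideanSpace ℝ (Fin 3)

/-- A lattice vector of ℤ³ inside ℝ³, used to express periodicity over the torus 𝕋³ = ℝ³/ℤ³. -/
def latticeVec (m : Fin 3 → ℤ) : E3 := WithLp.toLp 2 (fun i => (m i : ℝ))

/-- The Hessian matrix of `f` at `x`. -/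
def hess (f : E3 → ℝ) (x : E3) : Matrix (Fin 3) (Fin 3) ℝ :=
  Matrix.of fun i j => iteratedFDeriv ℝ 2 f x ![EuclideanSpace.single i 1, EuclideanSpace.single j 1]

/-!
Write `λ = ω²`. Since `λ ≥ 0 = λ 0`, the Hessian of `λ` at `0` is positive semidefinite, and being
invertible it is positive definite; by second-order Taylor expansion `λ x ≥ c ‖x‖²` near `0`.
Periodicity shows that `ω` vanishes nowhere else on the cube of half-width `19/20`, so by
compactness `ω x ≥ C₁ ‖x‖` on that cube.

For `‖k‖_∞ ≤ 1/2` and `|s| ≤ ε`, the point `k + s p/2` lies within `‖k‖/2` of `k`, hence in that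
cube and in the annulus `‖k‖/2 ≤ ‖x‖ ≤ 3‖k‖/2`. There `|∇λ| ≤ M ‖k‖`, `‖D²λ‖ ≤ M` and
`λ ≥ (C₁ ‖k‖/2)²`, so `f s = √λ(k + s p/2)` satisfies
`f'' = λ''/(2√λ) - λ'²/(4 λ^{3/2}) = O(‖p‖²/‖k‖)`, and two applications of the mean value
inequality bound `f ε - f (-ε) - 2 ε f' 0` by `O(ε² ‖p‖²/‖k‖)`.
-/

open Set Filter Topology Metric Asymptotics
open scoped Matrix

section SecondOrder

variable {E : Type*} [NormedAddCommGroup E] [NormedSpace ℝ E]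

theorem isLittleO_norm_sq_of_fderiv_isLittleO {F : Type*} [NormedAddCommGroup F]
    [NormedSpace ℝ F] {ψ : E → F} {ψ' : E → E →L[ℝ] F}
    (hψ : ∀ z, HasFDerivAt ψ (ψ' z) z) (h0 : ψ 0 = 0) (hψ' : ψ' =o[𝓝 0] fun z => z) :
    ψ =o[𝓝 0] fun y => ‖y‖ ^ 2 := by
  refine isLittleO_iff.mpr fun c hc => ?_
  obtain ⟨r, hr, hball⟩ := eventually_nhds_iff_ball.mp (isLittleO_iff.mp hψ' hc)
  filter_upwards [ball_mem_nhds 0 hr] with y hy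
  have hbound : ∀ z ∈ closedBall (0 : E) ‖y‖, ‖ψ' z‖ ≤ c * ‖y‖ := fun z hz =>
    (hball z (closedBall_subset_ball (mem_ball_zero_iff.mp hy) hz)).trans
      (by gcongr; simpa using hz)
  have hmvt := (convex_closedBall (0 : E) ‖y‖).norm_image_sub_le_of_norm_hasFDerivWithin_le
    (fun z _ => (hψ z).hasFDerivWithinAt) hbound (mem_closedBall_self (norm_nonneg y))
    (mem_closedBall_zero_iff.mpr le_rfl)
  rw [h0, sub_zero, sub_zero] at hmvt
  simpa [sq, mul_assoc] using hmvt

variable {f : E → ℝ}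

theorem isLittleO_taylor_two (hf : ContDiff ℝ 2 f) (x : E) :
    (fun y => f (x + y) - f x - fderiv ℝ f x y - (1 / 2) * fderiv ℝ (fderiv ℝ f) x y y)
      =o[𝓝 0] fun y => ‖y‖ ^ 2 := by
  set H := fderiv ℝ (fderiv ℝ f) x
  have hsymm : ∀ v w, H v w = H w v := hf.contDiffAt.isSymmSndFDerivAt (by simp)
  have hdf : Differentiable ℝ (fderiv ℝ f) := (hf.fderiv_right le_rfl).differentiable one_ne_zero
  refine isLittleO_norm_sq_of_fderiv_isLittleO
    (ψ' := fun z => fderiv ℝ f (x + z) - fderiv ℝ f x - H z) (fun z => ?_) (by simp)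
    (hasFDerivAt_iff_isLittleO_nhds_zero.mp (hdf x).hasFDerivAt)
  have hquad : HasFDerivAt (fun y => H y y)
      (H.precompR E z (.id ℝ E) + H.precompL E (.id ℝ E) z) z :=
    H.hasFDerivAt_of_bilinear (hasFDerivAt_id z) (hasFDerivAt_id z)
  have hshift : HasFDerivAt (fun y => f (x + y)) (fderiv ℝ f (x + z)) z :=
    (hasFDerivAt_comp_add_left x).mpr ((hf.differentiable two_ne_zero) _).hasFDerivAt
  refine (((hshift.sub_const _).sub (fderiv ℝ f x).hasFDerivAt).sub
    (hquad.const_mul (1 / 2))).congr_fderiv ?_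
  ext v
  simp only [one_div, ContinuousLinearMap.precompR, ContinuousLinearMap.comp_apply,
    ContinuousLinearMap.compL_apply, ContinuousLinearMap.comp_id, ContinuousLinearMap.precompL,
    ContinuousLinearMap.flip_apply, smul_add, sub_apply, add_apply, smul_apply, hsymm z v,
    smul_eq_mul, sub_right_inj]
  ring

theorem IsLocalMin.fderiv_fderiv_apply_self_nonneg (hf : ContDiff ℝ 2 f) {x : E}
    (hmin : IsLocalMin f x) (v : E) : 0 ≤ fderiv ℝ (fderiv ℝ f) x v v := by
  by_contra! hneg
  set a := fderiv ℝ (fderiv ℝ f) x v v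
  have hv : 0 < ‖v‖ := norm_pos_iff.mpr fun h => by simp [a, h] at hneg
  have hline : Tendsto (fun t : ℝ => t • v) (𝓝[≠] 0) (𝓝 0) :=
    (Continuous.tendsto' (by fun_prop) 0 0 (zero_smul ℝ v)).mono_left nhdsWithin_le_nhds
  have htaylor := hline.eventually
    (isLittleO_iff.mp (isLittleO_taylor_two hf x) (show 0 < -a / (4 * ‖v‖ ^ 2) by
      apply div_pos <;> [linarith; positivity]))
  have hge : ∀ᶠ t in 𝓝[≠] (0 : ℝ), f x ≤ f (x + t • v) := by
    have hshift := hline.const_add x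
    rw [add_zero] at hshift
    exact hshift.eventually hmin
  obtain ⟨t, ht, hfx, htne⟩ := (htaylor.and (hge.and self_mem_nhdsWithin)).exists
  have ht2 : 0 < t ^ 2 := by have : t ≠ 0 := htne; positivity
  have hnorm : ‖‖t • v‖ ^ 2‖ = t ^ 2 * ‖v‖ ^ 2 := by
    rw [norm_pow, norm_norm, norm_smul, mul_pow, Real.norm_eq_abs, sq_abs]
  have hsecond : fderiv ℝ (fderiv ℝ f) x (t • v) (t • v) = t ^ 2 * a := by
    simp only [map_smul, FunLike.coe_smul, Pi.smul_apply, smul_eq_mul, a]; ring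
  have hrhs : -a / (4 * ‖v‖ ^ 2) * (t ^ 2 * ‖v‖ ^ 2) = -a * t ^ 2 / 4 := by field_simp
  rw [hnorm, hsecond, hmin.fderiv_eq_zero, zero_apply, sub_zero, hrhs, Real.norm_eq_abs] at ht
  nlinarith [(abs_le.mp ht).2, mul_neg_of_neg_of_pos hneg ht2]

theorem exists_eventually_mul_sq_norm_le_of_isCoercive (hf : ContDiff ℝ 2 f) {x : E}
    (hcrit : fderiv ℝ f x = 0) (hcoer : IsCoercive (fderiv ℝ (fderiv ℝ f) x)) :
    ∃ c > 0, ∀ᶠ y in 𝓝 0, c * ‖y‖ ^ 2 ≤ f (x + y) - f x := by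
  obtain ⟨C, hC, hCH⟩ := hcoer
  refine ⟨C / 4, by positivity, ?_⟩
  filter_upwards [isLittleO_iff.mp (isLittleO_taylor_two hf x) (show 0 < C / 4 by positivity)]
    with y hy
  rw [hcrit, zero_apply, sub_zero, Real.norm_eq_abs, norm_pow, norm_norm] at hy
  nlinarith [(abs_le.mp hy).1, hCH y]

end SecondOrder

theorem isCoercive_of_pos {E : Type*} [NormedAddCommGroup E] [NormedSpace ℝ E]
    [FiniteDimensional ℝ E] (B : E →L[ℝ] E →L[ℝ] ℝ) (hB : ∀ x, x ≠ 0 → 0 < B x x) :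
    IsCoercive B := by
  obtain ⟨C, hC, hCB⟩ := (isCompact_sphere (0 : E) 1).exists_forall_le'
    (f := fun x => B x x) (by fun_prop) fun x hx => hB x (ne_zero_of_mem_unit_sphere ⟨x, hx⟩)
  refine ⟨C, hC, fun x => ?_⟩
  rcases eq_or_ne x 0 with rfl | hx
  · simp
  have hxn : 0 < ‖x‖ := norm_pos_iff.mpr hx
  have hunit := hCB (‖x‖⁻¹ • x) (by simp [norm_smul, hxn.ne'])
  simp only [map_smul, FunLike.coe_smul, Pi.smul_apply, smul_eq_mul] at hunit
  calc C * ‖x‖ * ‖x‖ ≤ ‖x‖⁻¹ * (‖x‖⁻¹ * B x x) * ‖x‖ * ‖x‖ := by gcongr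
    _ = B x x := by field_simp

theorem exists_mul_sq_norm_le_of_isCompact {E : Type*} [NormedAddCommGroup E] {K : Set E}
    (hK : IsCompact K) {g : E → ℝ} (hg : ContinuousOn g K) (hpos : ∀ x ∈ K, x ≠ 0 → 0 < g x)
    {c : ℝ} (hc : 0 < c) (hnear : ∀ᶠ y in 𝓝 0, c * ‖y‖ ^ 2 ≤ g y) :
    ∃ c₁ > 0, ∀ x ∈ K, c₁ * ‖x‖ ^ 2 ≤ g x := by
  obtain ⟨r, hr, hball⟩ := eventually_nhds_iff_ball.mp hnear
  have hfar : ∀ x ∈ K \ ball 0 r, 0 < ‖x‖ := fun x hx =>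
    hr.trans_le (by simpa using hx.2)
  obtain ⟨m, hm, hmK⟩ := (hK.diff isOpen_ball).exists_forall_le' (f := fun x => g x / ‖x‖ ^ 2)
    ((hg.mono sdiff_subset).div (by fun_prop) fun x hx => (pow_pos (hfar x hx) 2).ne')
    fun x hx => div_pos (hpos x hx.1 (norm_pos_iff.mp (hfar x hx))) (pow_pos (hfar x hx) 2)
  refine ⟨min c m, lt_min hc hm, fun x hxK => ?_⟩
  by_cases hx : x ∈ ball (0 : E) r
  · exact (mul_le_mul_of_nonneg_right (min_le_left c m) (sq_nonneg _)).trans (hball x hx)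
  · have := hmK x ⟨hxK, hx⟩
    rw [le_div_iff₀ (pow_pos (hfar x ⟨hxK, hx⟩) 2)] at this
    exact (mul_le_mul_of_nonneg_right (min_le_right c m) (sq_nonneg _)).trans this

theorem exists_bound_fderiv_of_contDiff {E : Type*} [NormedAddCommGroup E] [NormedSpace ℝ E]
    [ProperSpace E] {f : E → ℝ} (hf : ContDiff ℝ 2 f) {x : E} (hcrit : fderiv ℝ f x = 0) (R : ℝ) :
    ∃ M, ∀ y ∈ closedBall x R, ‖fderiv ℝ f y‖ ≤ M * ‖y - x‖ ∧ ‖fderiv ℝ (fderiv ℝ f) y‖ ≤ M := by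
  have hdf : ContDiff ℝ 1 (fderiv ℝ f) := hf.fderiv_right le_rfl
  obtain ⟨M, hM⟩ := (isCompact_closedBall x R).exists_bound_of_continuousOn
    (hdf.continuous_fderiv one_ne_zero).continuousOn
  refine ⟨M, fun y hy => ⟨?_, hM y hy⟩⟩
  simpa [hcrit] using (convex_closedBall x R).norm_image_sub_le_of_norm_fderiv_le
    (fun z _ => hdf.differentiable one_ne_zero z) hM (mem_closedBall_self (dist_nonneg.trans hy)) hy

theorem abs_sub_sub_two_mul_deriv_le {f f' f'' : ℝ → ℝ} {ε K : ℝ} (hε : 0 ≤ ε)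
    (hf : ∀ s ∈ Icc (-ε) ε, HasDerivAt f (f' s) s)
    (hf' : ∀ s ∈ Icc (-ε) ε, HasDerivAt f' (f'' s) s) (hK : ∀ s ∈ Icc (-ε) ε, |f'' s| ≤ K) :
    |f ε - f (-ε) - 2 * ε * f' 0| ≤ 2 * K * ε ^ 2 := by
  have h0 : (0 : ℝ) ∈ Icc (-ε) ε := ⟨by linarith, hε⟩
  have hslope : ∀ s ∈ Icc (-ε) ε, |f' s - f' 0| ≤ K * ε := fun s hs => by
    have := (convex_Icc (-ε) ε).norm_image_sub_le_of_norm_hasDerivWithin_le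
      (fun t ht => (hf' t ht).hasDerivWithinAt) hK h0 hs
    rw [Real.norm_eq_abs, Real.norm_eq_abs, sub_zero] at this
    exact this.trans (mul_le_mul_of_nonneg_left (abs_le.mpr hs) ((abs_nonneg _).trans (hK 0 h0)))
  have hhalf : ∀ s ∈ Icc (-ε) ε, |f s - f 0 - s * f' 0| ≤ K * ε * ε := fun s hs => by
    have := (convex_Icc (-ε) ε).norm_image_sub_le_of_norm_hasDerivWithin_le
      (f := fun t => f t - t * f' 0)
      (fun t ht => ((hf t ht).sub (hasDerivAt_mul_const (f' 0))).hasDerivWithinAt) hslope h0 hs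
    simp only [Real.norm_eq_abs, sub_zero, zero_mul] at this
    rw [sub_right_comm] at this
    exact this.trans (mul_le_mul_of_nonneg_left (abs_le.mpr hs)
      ((abs_nonneg _).trans (hslope 0 h0)))
  have hsplit : f ε - f (-ε) - 2 * ε * f' 0 =
      (f ε - f 0 - ε * f' 0) - (f (-ε) - f 0 - -ε * f' 0) := by ring
  rw [hsplit]
  linarith [abs_sub (f ε - f 0 - ε * f' 0) (f (-ε) - f 0 - -ε * f' 0),
    hhalf ε ⟨by linarith, le_rfl⟩, hhalf (-ε) ⟨le_rfl, by linarith⟩]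

theorem abs_sqrt_sub_sqrt_sub_two_mul_le {ℓ ℓ' ℓ'' : ℝ → ℝ} {ε q A B : ℝ} (hε : 0 ≤ ε)
    (hq : 0 < q) (hℓ : ∀ s ∈ Icc (-ε) ε, HasDerivAt ℓ (ℓ' s) s)
    (hℓ' : ∀ s ∈ Icc (-ε) ε, HasDerivAt ℓ' (ℓ'' s) s) (hlow : ∀ s ∈ Icc (-ε) ε, q ^ 2 ≤ ℓ s)
    (hB : ∀ s ∈ Icc (-ε) ε, |ℓ' s| ≤ B) (hA : ∀ s ∈ Icc (-ε) ε, |ℓ'' s| ≤ A) :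
    |√(ℓ ε) - √(ℓ (-ε)) - 2 * ε * (ℓ' 0 / (2 * √(ℓ 0)))| ≤
      2 * (A / (2 * q) + B ^ 2 / (4 * q ^ 3)) * ε ^ 2 := by
  have hpos : ∀ s ∈ Icc (-ε) ε, 0 < ℓ s := fun s hs => (pow_pos hq 2).trans_le (hlow s hs)
  refine abs_sub_sub_two_mul_deriv_le hε (fun s hs => (hℓ s hs).sqrt (hpos s hs).ne')
    (f'' := fun s => ℓ'' s / (2 * √(ℓ s)) - ℓ' s ^ 2 / (4 * √(ℓ s) ^ 3)) (fun s hs => ?_)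
    fun s hs => ?_
  · have hr : 0 < √(ℓ s) := Real.sqrt_pos.mpr (hpos s hs)
    refine ((hℓ' s hs).div (((hℓ s hs).sqrt (hpos s hs).ne').const_mul 2)
      (by positivity)).congr_deriv ?_
    field_simp
    rw [Real.sq_sqrt (hpos s hs).le]
    ring
  · have hr : q ≤ √(ℓ s) := Real.le_sqrt_of_sq_le (hlow s hs)
    have hr0 : 0 < √(ℓ s) := hq.trans_le hr
    have hq3 : q ^ 3 ≤ √(ℓ s) ^ 3 := pow_le_pow_left₀ hq.le hr 3
    have hB2 : ℓ' s ^ 2 ≤ B ^ 2 := sq_le_sq' (abs_le.mp (hB s hs)).1 (abs_le.mp (hB s hs)).2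
    calc |ℓ'' s / (2 * √(ℓ s)) - ℓ' s ^ 2 / (4 * √(ℓ s) ^ 3)|
        ≤ |ℓ'' s| / (2 * √(ℓ s)) + ℓ' s ^ 2 / (4 * √(ℓ s) ^ 3) := by
          refine (abs_sub _ _).trans_eq ?_
          rw [abs_div, abs_of_pos (by positivity : 0 < 2 * √(ℓ s)),
            abs_of_nonneg (by positivity : 0 ≤ ℓ' s ^ 2 / (4 * √(ℓ s) ^ 3))]
      _ ≤ A / (2 * q) + B ^ 2 / (4 * q ^ 3) := by
          gcongr
          · exact (abs_nonneg _).trans (hA s hs)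
          · exact hA s hs

theorem abs_sqrt_add_smul_sub_sub_fderiv_le {E : Type*} [NormedAddCommGroup E] [NormedSpace ℝ E]
    {lam : E → ℝ} (hlam : ContDiff ℝ 2 lam) {k u : E} {ε q A B : ℝ} (hε : 0 ≤ ε) (hq : 0 < q)
    (hseg : ∀ s ∈ Icc (-ε) ε, q ^ 2 ≤ lam (k + s • u) ∧ ‖fderiv ℝ lam (k + s • u)‖ ≤ B ∧
      ‖fderiv ℝ (fderiv ℝ lam) (k + s • u)‖ ≤ A) :
    |√(lam (k + ε • u)) - √(lam (k - ε • u)) - 2 * ε * fderiv ℝ (fun y => √(lam y)) k u| ≤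
      2 * (A * ‖u‖ ^ 2 / (2 * q) + (B * ‖u‖) ^ 2 / (4 * q ^ 3)) * ε ^ 2 := by
  have hd : Differentiable ℝ lam := hlam.differentiable two_ne_zero
  have hd2 : Differentiable ℝ (fderiv ℝ lam) :=
    (hlam.fderiv_right le_rfl).differentiable one_ne_zero
  have hline (s : ℝ) : HasDerivAt (fun t : ℝ => k + t • u) u s := by
    simpa using ((hasDerivAt_id s).smul_const u).const_add k
  have hk : 0 < lam k := by
    simpa using (pow_pos hq 2).trans_le (hseg 0 ⟨by linarith, hε⟩).1
  have hfd : fderiv ℝ (fun y => √(lam y)) k u = fderiv ℝ lam k u / (2 * √(lam k)) := by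
    rw [((hd k).hasFDerivAt.sqrt hk.ne').fderiv]
    simp [div_eq_inv_mul]
  have hB (s : ℝ) (hs : s ∈ Icc (-ε) ε) : |fderiv ℝ lam (k + s • u) u| ≤ B * ‖u‖ :=
    ((fderiv ℝ lam _).le_opNorm u).trans (by gcongr; exact (hseg s hs).2.1)
  have hA (s : ℝ) (hs : s ∈ Icc (-ε) ε) :
      |fderiv ℝ (fderiv ℝ lam) (k + s • u) u u| ≤ A * ‖u‖ ^ 2 :=
    ((fderiv ℝ (fderiv ℝ lam) _).le_opNorm₂ u u).trans (by
      rw [mul_assoc, ← sq]; gcongr; exact (hseg s hs).2.2)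
  have := abs_sqrt_sub_sqrt_sub_two_mul_le hε hq
    (fun s _ => (hd _).hasFDerivAt.comp_hasDerivAt s (hline s))
    (fun s _ => by simpa using
      ((hd2 _).hasFDerivAt.comp_hasDerivAt s (hline s)).clm_apply (hasDerivAt_const s u))
    (fun s hs => (hseg s hs).1) hB hA
  simpa [hfd, sub_eq_add_neg] using this

theorem isCompact_setOf_forall_abs_le {ι : Type*} [Fintype ι] (r : ℝ) :
    IsCompact {x : EuclideanSpace ℝ ι | ∀ i, |x i| ≤ r} := by
  convert (PiLp.homeomorph 2 fun _ : ι => ℝ).isCompact_preimage.mpr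
    (isCompact_univ_pi fun _ => isCompact_Icc (a := -r) (b := r))
  ext x
  simp only [mem_ofPred_eq, mem_preimage, mem_univ_pi, mem_Icc, abs_le]
  rfl

theorem norm_sq_le_of_forall_abs_le {ι : Type*} [Fintype ι] {x : EuclideanSpace ℝ ι} {r : ℝ}
    (h : ∀ i, |x i| ≤ r) : ‖x‖ ^ 2 ≤ Fintype.card ι * r ^ 2 := by
  rw [EuclideanSpace.norm_sq_eq]
  calc ∑ i, ‖x i‖ ^ 2 ≤ ∑ _i : ι, r ^ 2 := Finset.sum_le_sum fun i _ => by
        rw [Real.norm_eq_abs]; exact pow_le_pow_left₀ (abs_nonneg _) (h i) 2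
    _ = Fintype.card ι * r ^ 2 := by simp

theorem dotProduct_mulVec_of_apply_single {ι : Type*} [Fintype ι] [DecidableEq ι]
    (B : EuclideanSpace ℝ ι →L[ℝ] EuclideanSpace ℝ ι →L[ℝ] ℝ) (v : ι → ℝ) :
    v ⬝ᵥ (Matrix.of (fun i j => B (EuclideanSpace.single i 1) (EuclideanSpace.single j 1)) *ᵥ v)
      = B (WithLp.toLp 2 v) (WithLp.toLp 2 v) := by
  have hv : WithLp.toLp 2 v = ∑ i, v i • EuclideanSpace.single i (1 : ℝ) := by
    ext j; simp [Pi.single_apply]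
  rw [hv]
  simp only [dotProduct, Matrix.mulVec, Matrix.of_apply, map_sum, map_smul, FunLike.coe_sum,
    Finset.sum_apply, FunLike.coe_smul, Pi.smul_apply, smul_eq_mul, Finset.mul_sum]
  rw [Finset.sum_comm]
  exact Finset.sum_congr rfl fun i _ => Finset.sum_congr rfl fun j _ => by ring

theorem hess_apply (f : E3 → ℝ) (x : E3) (i j : Fin 3) :
    hess f x i j =
      fderiv ℝ (fderiv ℝ f) x (EuclideanSpace.single i 1) (EuclideanSpace.single j 1) := by
  simp [hess, iteratedFDeriv_two_apply]

theorem isCoercive_fderiv_fderiv_of_isUnit_det {f : E3 → ℝ} {x : E3} (hf : ContDiffAt ℝ 2 f x)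
    (hpsd : ∀ v, 0 ≤ fderiv ℝ (fderiv ℝ f) x v v) (hdet : IsUnit (hess f x).det) :
    IsCoercive (fderiv ℝ (fderiv ℝ f) x) := by
  set H := fderiv ℝ (fderiv ℝ f) x
  have hquad (v : Fin 3 → ℝ) :
      star v ⬝ᵥ (hess f x *ᵥ v) = H (WithLp.toLp 2 v) (WithLp.toLp 2 v) := by
    rw [star_trivial, show hess f x = Matrix.of fun i j =>
      H (EuclideanSpace.single i 1) (EuclideanSpace.single j 1) from Matrix.ext (hess_apply f x)]
    exact dotProduct_mulVec_of_apply_single H v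
  have hherm : (hess f x).IsHermitian := Matrix.IsHermitian.ext fun i j => by
    simp [hess_apply, hf.isSymmSndFDerivAt (by simp) (EuclideanSpace.single i 1)]
  have hposdef := (Matrix.PosSemidef.of_dotProduct_mulVec_nonneg hherm fun v => hquad v ▸ hpsd _
    ).posDef_iff_isUnit.mpr ((Matrix.isUnit_iff_isUnit_det _).mpr hdet)
  refine isCoercive_of_pos H fun v hv => ?_
  have hpos := hposdef.dotProduct_mulVec_pos (x := WithLp.ofLp v) (by simpa using hv)
  rwa [hquad, WithLp.toLp_ofLp] at hpos

theorem pos_of_forall_abs_lt_one (ω : E3 → ℝ)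
    (hper : ∀ (k : E3) (m : Fin 3 → ℤ), ω (k + latticeVec m) = ω k)
    (hreg : ∀ k : E3, k ≠ 0 → (∀ i, |k i| ≤ 1 / 2) → 0 < ω k)
    {x : E3} (hx : x ≠ 0) (hx1 : ∀ i, |x i| < 1) : 0 < ω x := by
  set m : Fin 3 → ℤ := fun i => round (x i)
  have hreduced : x - latticeVec m ≠ 0 := by
    refine fun h => hx (PiLp.ext fun i => ?_)
    have hxi : x i = round (x i) := by simpa [latticeVec, m, sub_eq_zero] using congrArg (· i) h
    have hround : round (x i) = 0 := Int.abs_lt_one_iff.mp (by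
      rw [← Int.cast_lt (R := ℝ), Int.cast_abs, ← hxi, Int.cast_one]; exact hx1 i)
    rw [hround, Int.cast_zero] at hxi
    simpa using hxi
  calc 0 < ω (x - latticeVec m) :=
        hreg _ hreduced fun i => by simpa [latticeVec, m] using abs_sub_round (x i)
    _ = ω x := by rw [← hper _ m, sub_add_cancel]

theorem exists_mul_norm_le_of_regular (ω : E3 → ℝ) (hnonneg : ∀ k, 0 ≤ ω k)
    (hper : ∀ (k : E3) (m : Fin 3 → ℤ), ω (k + latticeVec m) = ω k)
    (hsmooth : ContDiff ℝ 2 (fun k => (ω k) ^ 2)) (h0 : ω 0 = 0)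
    (hinv : IsUnit (hess (fun k => (ω k) ^ 2) 0).det)
    (hreg : ∀ k : E3, k ≠ 0 → (∀ i, |k i| ≤ 1 / 2) → 0 < ω k) :
    ∃ C₁ > 0, ∀ x : E3, (∀ i, |x i| ≤ 19 / 20) → C₁ * ‖x‖ ≤ ω x := by
  have hmin : IsLocalMin (fun k => ω k ^ 2) 0 := .of_forall fun y => by simp [h0, sq_nonneg]
  have hcoer := isCoercive_fderiv_fderiv_of_isUnit_det hsmooth.contDiffAt
    (hmin.fderiv_fderiv_apply_self_nonneg hsmooth) hinv
  obtain ⟨c, hc, hnear⟩ :=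
    exists_eventually_mul_sq_norm_le_of_isCoercive hsmooth hmin.fderiv_eq_zero hcoer
  obtain ⟨c₁, hc₁, hK⟩ := exists_mul_sq_norm_le_of_isCompact
    (isCompact_setOf_forall_abs_le (19 / 20)) hsmooth.continuous.continuousOn
    (fun x hxK hx => pow_pos (pos_of_forall_abs_lt_one ω hper hreg hx
      fun i => (hxK i).trans_lt (by norm_num)) 2) hc (by simpa [h0] using hnear)
  refine ⟨√c₁, Real.sqrt_pos.mpr hc₁, fun x hx => ?_⟩
  calc √c₁ * ‖x‖ = √(c₁ * ‖x‖ ^ 2) := by rw [Real.sqrt_mul hc₁.le, Real.sqrt_sq (norm_nonneg _)]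
    _ ≤ √(ω x ^ 2) := Real.sqrt_le_sqrt (hK x hx)
    _ = ω x := Real.sqrt_sq (hnonneg x)

theorem abs_sqrt_sub_sqrt_sub_fderiv_le_of_bounds {lam : E3 → ℝ} (hlam : ContDiff ℝ 2 lam)
    {C₁ M : ℝ} (hC₁ : 0 < C₁) (hlow : ∀ x : E3, (∀ i, |x i| ≤ 19 / 20) → (C₁ * ‖x‖) ^ 2 ≤ lam x)
    (hM : ∀ x ∈ closedBall (0 : E3) 2,
      ‖fderiv ℝ lam x‖ ≤ M * ‖x‖ ∧ ‖fderiv ℝ (fderiv ℝ lam) x‖ ≤ M)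
    {ε : ℝ} (hε : 0 < ε) {p k : E3} (hk : ∀ i, |k i| ≤ 1 / 2) (hεk : ε * ‖p‖ < ‖k‖) :
    |√(lam (k + (ε / 2) • p)) - √(lam (k - (ε / 2) • p)) - ε * fderiv ℝ (fun y => √(lam y)) k p|
      ≤ (M / (2 * C₁) + 9 * M ^ 2 / (4 * C₁ ^ 3)) * ε ^ 2 * ‖p‖ ^ 2 / ‖k‖ := by
  have hk0 : 0 < ‖k‖ := (by positivity : 0 ≤ ε * ‖p‖).trans_lt hεk
  have hk1 : ‖k‖ ≤ 9 / 10 := by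
    have := norm_sq_le_of_forall_abs_le hk
    norm_num at this
    nlinarith [norm_nonneg k]
  have hM0 : 0 ≤ M := (norm_nonneg (fderiv ℝ (fderiv ℝ lam) 0)).trans (hM 0 (by simp)).2
  set u : E3 := (1 / 2 : ℝ) • p
  have hu : ‖u‖ = ‖p‖ / 2 := by simp [u, norm_smul, div_eq_inv_mul]
  have hclose : ∀ s ∈ Icc (-ε) ε, ‖k + s • u - k‖ ≤ ‖k‖ / 2 := fun s hs => by
    rw [add_sub_cancel_left, norm_smul, Real.norm_eq_abs, hu]
    have := abs_le.mpr hs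
    nlinarith [norm_nonneg p]
  have hseg : ∀ s ∈ Icc (-ε) ε, (C₁ * ‖k‖ / 2) ^ 2 ≤ lam (k + s • u) ∧
      ‖fderiv ℝ lam (k + s • u)‖ ≤ M * (3 / 2 * ‖k‖) ∧
      ‖fderiv ℝ (fderiv ℝ lam) (k + s • u)‖ ≤ M := fun s hs => by
    set y := k + s • u
    have hyk := hclose s hs
    have hy_lower : ‖k‖ / 2 ≤ ‖y‖ := by linarith [norm_sub_norm_le k y, norm_sub_rev y k]
    have hy_upper : ‖y‖ ≤ 3 / 2 * ‖k‖ := by linarith [norm_sub_norm_le y k]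
    have hy_cube : ∀ i, |y i| ≤ 19 / 20 := fun i => by
      have := (PiLp.norm_apply_le (y - k) i).trans hyk
      rw [PiLp.sub_apply, Real.norm_eq_abs] at this
      linarith [abs_sub_abs_le_abs_sub (y i) (k i), hk i]
    have hy_ball : y ∈ closedBall (0 : E3) 2 := mem_closedBall_zero_iff.mpr (by linarith)
    refine ⟨(pow_le_pow_left₀ (by positivity) (by nlinarith) 2).trans (hlow y hy_cube),
      (hM y hy_ball).1.trans (by gcongr), (hM y hy_ball).2⟩
  have := abs_sqrt_add_smul_sub_sub_fderiv_le hlam hε.le (by positivity) hseg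
  have hεu : ε • u = (ε / 2) • p := by rw [smul_smul, mul_one_div]
  rw [hεu, map_smul, smul_eq_mul, hu] at this
  convert this using 2
  · ring
  · field_simp
    ring

theorem stmt5_general (ω : E3 → ℝ)
    (hnonneg : ∀ k, 0 ≤ ω k)
    (hper : ∀ (k : E3) (m : Fin 3 → ℤ), ω (k + latticeVec m) = ω k)
    (hsmooth : ContDiff ℝ 3 (fun k => (ω k) ^ 2))
    (h0 : ω 0 = 0)
    (hinv : IsUnit (hess (fun k => (ω k) ^ 2) 0).det)
    (hreg : ∀ k : E3, k ≠ 0 → (∀ i, |k i| ≤ 1 / 2) → 0 < ω k) :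
    ∃ C₃ : ℝ, ∀ ε : ℝ, 0 < ε → ∀ p k : E3, (∀ i, |k i| ≤ 1 / 2) → ε * ‖p‖ < ‖k‖ →
      |ω (k + (ε / 2) • p) - ω (k - (ε / 2) • p) - ε * fderiv ℝ ω k p| ≤
        C₃ * ε ^ 2 * ‖p‖ ^ 2 / ‖k‖ := by
  have hlam : ContDiff ℝ 2 (fun k => ω k ^ 2) := hsmooth.of_le (by norm_num)
  obtain ⟨C₁, hC₁, hω⟩ := exists_mul_norm_le_of_regular ω hnonneg hper hlam h0 hinv hreg
  have hmin : IsLocalMin (fun k => ω k ^ 2) 0 := .of_forall fun y => by simp [h0, sq_nonneg]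
  obtain ⟨M, hM⟩ := exists_bound_fderiv_of_contDiff hlam hmin.fderiv_eq_zero 2
  refine ⟨M / (2 * C₁) + 9 * M ^ 2 / (4 * C₁ ^ 3), fun ε hε p k hk hεk => ?_⟩
  have hsqrt : ω = fun y => √(ω y ^ 2) := funext fun y => (Real.sqrt_sq (hnonneg y)).symm
  rw [hsqrt]
  exact abs_sqrt_sub_sqrt_sub_fderiv_le_of_bounds hlam hC₁
    (fun x hx => pow_le_pow_left₀ (by positivity) (hω x hx) 2) (by simpa using hM) hε hk hεk

/-- For a regular acoustic dispersion relation ω there is C₃ such that for ε > 0, p ∈ ℝ³ and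
‖k‖_∞ ≤ 1/2 with |k| > ε|p| one has
|ω(k + εp/2) − ω(k − εp/2) − εp·∇ω(k)| ≤ C₃ ε²|p|²/|k|. -/
theorem stmt5 (ω : E3 → ℝ)
    (hcont : Continuous ω)
    (hnonneg : ∀ k, 0 ≤ ω k)
    (hper : ∀ (k : E3) (m : Fin 3 → ℤ), ω (k + latticeVec m) = ω k)
    (hsmooth : ContDiff ℝ 3 (fun k => (ω k) ^ 2))
    (h0 : ω 0 = 0)
    (hinv : IsUnit (hess (fun k => (ω k) ^ 2) 0).det)
    (hreg : ∀ k : E3, k ≠ 0 → (∀ i, |k i| ≤ 1 / 2) → 0 < ω k) :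
    ∃ C₃ : ℝ, ∀ ε : ℝ, 0 < ε → ∀ p k : E3, (∀ i, |k i| ≤ 1 / 2) → ε * ‖p‖ < ‖k‖ →
      |ω (k + (ε / 2) • p) - ω (k - (ε / 2) • p) - ε * fderiv ℝ ω k p| ≤
        C₃ * ε ^ 2 * ‖p‖ ^ 2 / ‖k‖ :=
  stmt5_general ω hnonneg hper hsmooth h0 hinv hreg
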